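/- For a.e. ω ∈ Ω, sup_{n≥0} ‖G_n‖_BV < ∞, where G_n = (1/h_{σ^n ω}) Σ_{j=0}^{n-1} 𝓛_{σ^j ω}^{(n-j)}(ψ̃_{σ^j ω} h_{σ^j ω}). -/

import Mathlib

open MeasureTheory Filter ENNReal

noncomputable section

namespace RandomASIP

variable {Ω X : Type*} [MeasurableSpace Ω] [MeasurableSpace X]

/-- The iterated maps `f_ω^n = f_{σ^{n-1}ω} ∘ ⋯ ∘ f_ω`. -/
def fIter (σ : Ω → Ω) (f : Ω → X → X) (ω : Ω) : ℕ → X → X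
  | 0 => id
  | n + 1 => f (σ^[n] ω) ∘ fIter σ f ω n

/-- The iterated transfer operators `𝓛_ω^{(n)} = 𝓛_{σ^{n-1}ω} ∘ ⋯ ∘ 𝓛_ω`. -/
def Lit (σ : Ω → Ω) (L : Ω → (X → ℝ) → X → ℝ) (ω : Ω) : ℕ → (X → ℝ) → X → ℝ
  | 0 => fun φ => φ
  | n + 1 => fun φ => L (σ^[n] ω) (Lit σ L ω n φ)

/-- The BV norm `‖φ‖_BV = var(φ) + ‖φ‖₁`. -/
def bvNorm (m : Measure X) (var : (X → ℝ) → ℝ≥0∞) (φ : X → ℝ) : ℝ≥0∞ :=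
  var φ + eLpNorm φ 1 m

/-- The norm `‖φ‖_var = var(φ) + ‖φ‖_∞`. -/
def varNorm (m : Measure X) (var : (X → ℝ) → ℝ≥0∞) (φ : X → ℝ) : ℝ≥0∞ :=
  var φ + eLpNorm φ ∞ m

/-- Membership in `BV = {φ ∈ L¹(m) : var(φ) < ∞}`. -/
def MemBV (m : Measure X) (var : (X → ℝ) → ℝ≥0∞) (φ : X → ℝ) : Prop :=
  Integrable φ m ∧ var φ < ∞

/-- The cone `C_a = {φ ∈ BV : φ ≥ 0 and var(φ) ≤ a ∫ φ dm}`. -/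
def coneC (m : Measure X) (var : (X → ℝ) → ℝ≥0∞) (a : ℝ) : Set (X → ℝ) :=
  {φ | MemBV m var φ ∧ 0 ≤ᵐ[m] φ ∧ var φ ≤ ENNReal.ofReal (a * ∫ x, φ x ∂m)}

/-- Conditions (V1)–(V8) on the abstract variation functional. -/
structure VariationGood (m : Measure X) (var : (X → ℝ) → ℝ≥0∞) : Prop where
  /-- (V1) -/
  v1 : ∀ (t : ℝ) (h : X → ℝ), var (fun x => t * h x) = ENNReal.ofReal |t| * var h
  /-- (V2) -/
  v2 : ∀ g h : X → ℝ, var (g + h) ≤ var g + var h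
  /-- (V3) -/
  v3 : ∃ Cvar : ℝ, 1 ≤ Cvar ∧ ∀ h : X → ℝ,
        eLpNorm h ∞ m ≤ ENNReal.ofReal Cvar * (eLpNorm h 1 m + var h)
  /-- (V4): `L¹(m)`-compactness of BV-balls, in sequential form -/
  v4 : ∀ C : ℝ≥0∞, ∀ g : ℕ → X → ℝ, (∀ n, eLpNorm (g n) 1 m + var (g n) ≤ C) →
        ∃ (ns : ℕ → ℕ) (φ : X → ℝ), StrictMono ns ∧
          Tendsto (fun k => eLpNorm (g (ns k) - φ) 1 m) atTop (nhds 0)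
  /-- (V5) -/
  v5 : var (fun _ => (1 : ℝ)) < ∞
  /-- (V6) -/
  v6 : ∀ h : X → ℝ, 0 ≤ᵐ[m] h → eLpNorm h 1 m = 1 → ∀ ε : ℝ≥0∞, 0 < ε →
        ∃ g : X → ℝ, 0 ≤ᵐ[m] g ∧ eLpNorm g 1 m = 1 ∧ var g < ∞ ∧ eLpNorm (h - g) 1 m < ε
  /-- (V7) -/
  v7 : ∃ Kvar : ℝ≥0∞, Kvar < ∞ ∧ ∀ g h : X → ℝ,
        var (g * h) + eLpNorm (g * h) 1 m ≤
          Kvar * (var h + eLpNorm h 1 m) * (var g + eLpNorm g 1 m)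
  /-- (V8) -/
  v8 : ∀ g : X → ℝ, 0 < essInf g m →
        var (fun x => 1 / g x) ≤ var g / ENNReal.ofReal (essInf g m) ^ 2

/-- The hypotheses on the random dynamical system: `σ` is an invertible ergodic
measure-preserving map, the `𝓛_ω` are the transfer operators of the `f_ω`, and
the uniformly good conditions (H1)–(H5) hold. -/
structure UniformlyGood (P : Measure Ω) (σ : Ω → Ω) (m : Measure X)
    (var : (X → ℝ) → ℝ≥0∞) (f : Ω → X → X) (L : Ω → (X → ℝ) → X → ℝ) : Prop where
  sigma_bij : Function.Bijective σ
  sigma_pres : MeasurePreserving σ P P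
  sigma_erg : Ergodic σ P
  f_meas : ∀ ω, Measurable (f ω)
  /-- `𝓛_ω` descends to `L¹(m)` -/
  L_congr : ∀ ω (φ₁ φ₂ : X → ℝ), φ₁ =ᵐ[m] φ₂ → L ω φ₁ =ᵐ[m] L ω φ₂
  L_int : ∀ ω (φ : X → ℝ), Integrable φ m → Integrable (L ω φ) m
  /-- the duality relation defining the transfer operator `𝓛_ω` -/
  duality : ∀ ω (φ ψ : X → ℝ), Integrable φ m → Measurable ψ → (∃ c : ℝ, ∀ x, |ψ x| ≤ c) →
      ∫ x, L ω φ x * ψ x ∂m = ∫ x, φ x * ψ (f ω x) ∂m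
  /-- (H1) -/
  h1 : ∀ H : Ω → X → ℝ, Measurable (Function.uncurry H) →
      Measurable fun p : Ω × X => L p.1 (H p.1) p.2
  /-- (H2) -/
  h2 : ∃ C : ℝ, 0 < C ∧ ∀ᵐ ω ∂P, ∀ φ : X → ℝ,
      bvNorm m var (L ω φ) ≤ ENNReal.ofReal C * bvNorm m var φ
  /-- (H3) -/
  h3 : ∀ᵐ ω ∂P, ∃ B : ℝ≥0∞, B < ∞ ∧ ∀ (n : ℕ) (φ : X → ℝ), bvNorm m var φ ≤ 1 →
      bvNorm m var (φ ∘ f (σ^[n] ω)) ≤ B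
  /-- (H4) -/
  h4 : ∃ N : ℕ, 0 < N ∧ ∀ a : ℝ, 0 < a → ∃ n₀ : ℕ, ∀ n, n₀ ≤ n → ∃ c : ℝ, 0 < c ∧
      ∀ᵐ ω ∂P, ∀ g ∈ coneC m var a,
        c / 2 * ∫ x, |g x| ∂m ≤ essInf (Lit σ L ω (N * n) g) m
  /-- (H5) -/
  h5 : ∃ K lam : ℝ, 0 < K ∧ 0 < lam ∧ ∀ᵐ ω ∂P, ∀ (n : ℕ) (φ : X → ℝ), MemBV m var φ →
      (∫ x, φ x ∂m) = 0 →
      bvNorm m var (Lit σ L ω n φ) ≤ ENNReal.ofReal (K * Real.exp (-lam * n)) * bvNorm m var φ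

/-- The properties of the unique random absolutely continuous invariant density `h`. -/
structure IsACIM (P : Measure Ω) (σ : Ω → Ω) (m : Measure X)
    (var : (X → ℝ) → ℝ≥0∞) (L : Ω → (X → ℝ) → X → ℝ) (h : Ω → X → ℝ) : Prop where
  meas : Measurable (Function.uncurry h)
  nonneg : ∀ ω x, 0 ≤ h ω x
  mem_bv : ∀ᵐ ω ∂P, MemBV m var (h ω)
  mass : ∀ᵐ ω ∂P, (∫ x, h ω x ∂m) = 1
  equiv : ∀ᵐ ω ∂P, L ω (h ω) =ᵐ[m] h (σ ω)
  bdd : ∃ B : ℝ≥0∞, B < ∞ ∧ ∀ᵐ ω ∂P, bvNorm m var (h ω) ≤ B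

/-- The fibered measure `μ_ω` with `dμ_ω = h_ω dm`. -/
def muOmega (m : Measure X) (h : Ω → X → ℝ) (ω : Ω) : Measure X :=
  m.withDensity fun x => ENNReal.ofReal (h ω x)

/-- The skew product `τ(ω,x) = (σ ω, f_ω x)`. -/
def tau (σ : Ω → Ω) (f : Ω → X → X) : Ω × X → Ω × X :=
  fun p => (σ p.1, f p.1 p.2)

/-- The invariant measure `μ` of the skew product, `dμ = h d(ℙ × m)`. -/
def muProd (P : Measure Ω) (m : Measure X) (h : Ω → X → ℝ) : Measure (Ω × X) :=
  (P.prod m).withDensity fun p => ENNReal.ofReal (h p.1 p.2)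

/-- The centered observable `ψ̃_ω = ψ_ω − ∫ ψ_ω dμ_ω`. -/
def centered (m : Measure X) (h : Ω → X → ℝ) (ψ : Ω → X → ℝ) (ω : Ω) : X → ℝ :=
  fun x => ψ ω x - ∫ y, ψ ω y ∂(muOmega m h ω)

/-- The functions `G_k` of the martingale decomposition: `G₀ = 0` and
`G_{k+1} = 𝓛_{σ^k ω}(ψ̃_{σ^k ω} h_{σ^k ω} + G_k h_{σ^k ω}) / h_{σ^{k+1} ω}`. -/
def Gseq (σ : Ω → Ω) (L : Ω → (X → ℝ) → X → ℝ) (h ψt : Ω → X → ℝ) (ω : Ω) : ℕ → X → ℝ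
  | 0 => 0
  | k + 1 => fun x =>
      L (σ^[k] ω) (fun y => ψt (σ^[k] ω) y * h (σ^[k] ω) y + Gseq σ L h ψt ω k y * h (σ^[k] ω) y) x /
        h (σ^[k + 1] ω) x

/-- `M_n = ψ̃_{σ^n ω} + G_n − G_{n+1} ∘ f_{σ^n ω}`. -/
def Mseq (σ : Ω → Ω) (f : Ω → X → X) (L : Ω → (X → ℝ) → X → ℝ)
    (h ψt : Ω → X → ℝ) (ω : Ω) (n : ℕ) : X → ℝ :=
  fun x => ψt (σ^[n] ω) x + Gseq σ L h ψt ω n x - Gseq σ L h ψt ω (n + 1) (f (σ^[n] ω) x)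

/-- The σ-algebra `𝓣_ω^n = (f_ω^n)⁻¹(𝓑)`. -/
def Talg (σ : Ω → Ω) (f : Ω → X → X) (ω : Ω) (n : ℕ) : MeasurableSpace X :=
  MeasurableSpace.comap (fIter σ f ω n) inferInstance

end RandomASIP

namespace RandomASIP

/-- `G_n = (1/h_{σ^n ω}) Σ_{j=0}^{n-1} 𝓛_{σ^j ω}^{(n-j)}(ψ̃_{σ^j ω} h_{σ^j ω})`. -/
def Gsum {Ω X : Type*} [MeasurableSpace Ω] [MeasurableSpace X]
    (σ : Ω → Ω) (L : Ω → (X → ℝ) → X → ℝ) (h ψt : Ω → X → ℝ) (ω : Ω) (n : ℕ) : X → ℝ :=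
  fun x =>
    (∑ j ∈ Finset.range n,
        Lit σ L (σ^[j] ω) (n - j) (fun y => ψt (σ^[j] ω) y * h (σ^[j] ω) y) x) /
      h (σ^[n] ω) x

/-!
By (V7), `‖G_n‖_BV ≤ K_var ‖1/h_{σⁿω}‖_BV ‖Σ_{j<n} 𝓛^{(n-j)}_{σʲω}(ψ̃_{σʲω} h_{σʲω})‖_BV`.
The first factor is bounded through (V8) and `h ≥ c/2`. Each `ψ̃_{σʲω} h_{σʲω}` has zero
`m`-integral and a BV norm bounded uniformly in `j` by (V7) and the bounds on `ψ` and `h`, so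
the decay (H5) bounds the `j`-th summand by `K e^{-λ(n-j)}` times a constant and the sum by a
geometric series. Since `σ` preserves `ℙ`, the fibre estimates hold at every `σʲω` for a.e. `ω`.
-/

namespace VariationGood

variable {X : Type*} [MeasurableSpace X] {m : Measure X} {var : (X → ℝ) → ℝ≥0∞}

lemma exists_bvNorm_mul_le (hvar : VariationGood m var) : ∃ Kvar < ∞, ∀ g k : X → ℝ,
    bvNorm m var (g * k) ≤ Kvar * bvNorm m var k * bvNorm m var g :=
  hvar.v7

lemma var_zero (hvar : VariationGood m var) : var 0 = 0 := by
  have h0 := hvar.v1 0 0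
  simp only [zero_mul, abs_zero, ENNReal.ofReal_zero] at h0
  exact h0

lemma var_sum_le (hvar : VariationGood m var) {ι : Type*} (s : Finset ι) (g : ι → X → ℝ) :
    var (∑ j ∈ s, g j) ≤ ∑ j ∈ s, var (g j) := by
  classical
  induction s using Finset.induction with
  | empty => simp [hvar.var_zero]
  | insert a s ha ih =>
    rw [Finset.sum_insert ha, Finset.sum_insert ha]
    exact (hvar.v2 _ _).trans (add_le_add_right ih _)

lemma bvNorm_sum_le (hvar : VariationGood m var) {ι : Type*} {s : Finset ι} {g : ι → X → ℝ}
    (hg : ∀ j ∈ s, AEStronglyMeasurable (g j) m) :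
    bvNorm m var (∑ j ∈ s, g j) ≤ ∑ j ∈ s, bvNorm m var (g j) := by
  simp only [bvNorm, Finset.sum_add_distrib]
  exact add_le_add (hvar.var_sum_le s g) (eLpNorm_sum_le hg le_rfl)

lemma bvNorm_sum_range_le_of_geometric (hvar : VariationGood m var) {n : ℕ} {g : ℕ → X → ℝ}
    (hg : ∀ j ∈ Finset.range n, AEStronglyMeasurable (g j) m) {A ρ : ℝ≥0∞}
    (hbound : ∀ j ∈ Finset.range n, bvNorm m var (g j) ≤ A * ρ ^ (n - j)) :
    bvNorm m var (∑ j ∈ Finset.range n, g j) ≤ A * (1 - ρ)⁻¹ := by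
  have hreflect : ∑ j ∈ Finset.range n, ρ ^ (n - j) = ∑ j ∈ Finset.range n, ρ ^ (j + 1) := by
    rw [← Finset.sum_range_reflect (fun j => ρ ^ (j + 1)) n]
    refine Finset.sum_congr rfl fun j hj => ?_
    have := Finset.mem_range.mp hj
    congr 1
    omega
  have hgeom : ∑ j ∈ Finset.range n, ρ ^ (n - j) ≤ (1 - ρ)⁻¹ :=
    calc ∑ j ∈ Finset.range n, ρ ^ (n - j)
        ≤ ∑ j ∈ Finset.range (n + 1), ρ ^ j := by
          rw [hreflect, Finset.sum_range_succ']
          exact le_self_add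
      _ ≤ ∑' j, ρ ^ j := ENNReal.sum_le_tsum _
      _ = (1 - ρ)⁻¹ := ENNReal.tsum_geometric ρ
  calc bvNorm m var (∑ j ∈ Finset.range n, g j)
      ≤ ∑ j ∈ Finset.range n, A * ρ ^ (n - j) :=
        (hvar.bvNorm_sum_le hg).trans (Finset.sum_le_sum hbound)
    _ ≤ A * (1 - ρ)⁻¹ := by
        rw [← Finset.mul_sum]
        gcongr

lemma bvNorm_sub_const_le [IsProbabilityMeasure m] (hvar : VariationGood m var) {φ : X → ℝ}
    (hφ : AEStronglyMeasurable φ m) (a : ℝ) :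
    bvNorm m var (fun x => φ x - a) ≤
      bvNorm m var φ + ENNReal.ofReal |a| * (var (fun _ => 1) + 1) := by
  have hsplit : (fun x => φ x - a) = φ + fun x => -a * (fun _ => (1 : ℝ)) x := by
    funext x
    show φ x - a = φ x + -a * 1
    ring
  have hvar_le : var (fun x => φ x - a) ≤ var φ + ENNReal.ofReal |a| * var (fun _ => 1) := by
    rw [hsplit, ← abs_neg a, ← hvar.v1]
    exact hvar.v2 _ _
  have hL1_le : eLpNorm (fun x => φ x - a) 1 m ≤ eLpNorm φ 1 m + ENNReal.ofReal |a| := by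
    refine (eLpNorm_sub_le hφ aestronglyMeasurable_const le_rfl).trans_eq ?_
    rw [eLpNorm_const a one_ne_zero (NeZero.ne m)]
    simp [Real.enorm_eq_ofReal_abs]
  calc bvNorm m var (fun x => φ x - a)
      ≤ (var φ + ENNReal.ofReal |a| * var (fun _ => 1)) + (eLpNorm φ 1 m + ENNReal.ofReal |a|) :=
        add_le_add hvar_le hL1_le
    _ = bvNorm m var φ + ENNReal.ofReal |a| * (var (fun _ => 1) + 1) := by
        rw [bvNorm]; ring

lemma bvNorm_one_div_le [IsProbabilityMeasure m] (hvar : VariationGood m var) {g : X → ℝ}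
    (hg : 0 ≤ᵐ[m] g) {a : ℝ} (ha : 0 < a) (hga : a ≤ essInf g m) :
    bvNorm m var (fun x => 1 / g x) ≤ var g / ENNReal.ofReal a ^ 2 + ENNReal.ofReal a⁻¹ := by
  have hvar_le : var (fun x => 1 / g x) ≤ var g / ENNReal.ofReal a ^ 2 :=
    (hvar.v8 g (ha.trans_le hga)).trans <| ENNReal.div_le_div_left
      (pow_le_pow_left₀ zero_le (ENNReal.ofReal_le_ofReal hga) 2) _
  have hbelow : ∀ᵐ x ∂m, a ≤ g x := by
    filter_upwards [ae_essInf_le (isBoundedUnder_of_eventually_ge hg)] with x hx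
    exact hga.trans hx
  have hL1_le : eLpNorm (fun x => 1 / g x) 1 m ≤ ENNReal.ofReal a⁻¹ := by
    refine (eLpNorm_le_of_ae_bound (C := a⁻¹) ?_).trans_eq (by simp)
    filter_upwards [hbelow] with x hx
    rw [Real.norm_eq_abs, abs_of_nonneg (one_div_nonneg.mpr (ha.le.trans hx)), one_div]
    exact inv_anti₀ ha hx
  exact add_le_add hvar_le hL1_le

end VariationGood

lemma memBV_of_bvNorm_lt_top {X : Type*} [MeasurableSpace X] {m : Measure X}
    {var : (X → ℝ) → ℝ≥0∞} {φ : X → ℝ} (hφ : AEStronglyMeasurable φ m)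
    (hbv : bvNorm m var φ < ∞) : MemBV m var φ :=
  ⟨memLp_one_iff_integrable.mp ⟨hφ, le_add_self.trans_lt hbv⟩, le_self_add.trans_lt hbv⟩

lemma ae_forall_iterate {Ω : Type*} [MeasurableSpace Ω] {P : Measure Ω} {σ : Ω → Ω}
    (hσ : MeasurePreserving σ P P) {p : Ω → Prop} (hp : ∀ᵐ ω ∂P, p ω) :
    ∀ᵐ ω ∂P, ∀ j, p (σ^[j] ω) :=
  ae_all_iff.mpr fun j => (hσ.iterate j).quasiMeasurePreserving.ae hp

section Fibres

variable {Ω X : Type*} [MeasurableSpace X] {m : Measure X}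
  {var : (X → ℝ) → ℝ≥0∞}

lemma integrable_Lit {σ : Ω → Ω} {L : Ω → (X → ℝ) → X → ℝ}
    (hL : ∀ ω φ, Integrable φ m → Integrable (L ω φ) m) (ω : Ω) (n : ℕ) {φ : X → ℝ}
    (hφ : Integrable φ m) : Integrable (Lit σ L ω n φ) m := by
  induction n with
  | zero => exact hφ
  | succ n ih => exact hL _ _ ih

lemma memBV_mul {Kvar : ℝ≥0∞} (hKvar : Kvar < ∞)
    (hmul : ∀ g k : X → ℝ, bvNorm m var (g * k) ≤ Kvar * bvNorm m var k * bvNorm m var g)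
    {g k : X → ℝ} (hg : Measurable g) (hk : Measurable k)
    (hg_bv : bvNorm m var g < ∞) (hk_bv : bvNorm m var k < ∞) :
    MemBV m var (g * k) :=
  memBV_of_bvNorm_lt_top (hg.mul hk).aestronglyMeasurable
    ((hmul g k).trans_lt (by finiteness))

variable {h ψ : Ω → X → ℝ} {ω : Ω}

lemma integral_muOmega (hmeas : Measurable (h ω)) (hnn : ∀ x, 0 ≤ h ω x) (φ : X → ℝ) :
    ∫ x, φ x ∂(muOmega m h ω) = ∫ x, φ x * h ω x ∂m := by
  rw [muOmega, integral_withDensity_eq_integral_toReal_smul hmeas.ennreal_ofReal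
    (ae_of_all _ fun _ => ENNReal.ofReal_lt_top)]
  simp_rw [ENNReal.toReal_ofReal (hnn _), smul_eq_mul, mul_comm]

lemma integral_centered_mul_eq_zero (hmeas : Measurable (h ω)) (hnn : ∀ x, 0 ≤ h ω x)
    (hint : Integrable (h ω) m) (hmass : ∫ x, h ω x ∂m = 1)
    (hψh : Integrable (fun x => ψ ω x * h ω x) m) :
    ∫ x, centered m h ψ ω x * h ω x ∂m = 0 := by
  simp_rw [centered, sub_mul]
  rw [integral_sub hψh (hint.const_mul _), integral_const_mul, hmass, integral_muOmega hmeas hnn,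
    mul_one, sub_self]

lemma bvNorm_centered_le [IsProbabilityMeasure m] (hvar : VariationGood m var) {Kvar : ℝ≥0∞}
    (hmul : ∀ g k : X → ℝ, bvNorm m var (g * k) ≤ Kvar * bvNorm m var k * bvNorm m var g)
    (hmeas : Measurable (h ω)) (hnn : ∀ x, 0 ≤ h ω x) (hψ : AEStronglyMeasurable (ψ ω) m) :
    bvNorm m var (centered m h ψ ω) ≤ bvNorm m var (ψ ω) +
      Kvar * bvNorm m var (h ω) * bvNorm m var (ψ ω) * (var (fun _ => 1) + 1) := by
  have hmean : ENNReal.ofReal |∫ x, ψ ω x ∂(muOmega m h ω)| ≤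
      Kvar * bvNorm m var (h ω) * bvNorm m var (ψ ω) :=
    calc ENNReal.ofReal |∫ x, ψ ω x ∂(muOmega m h ω)|
        = ‖∫ x, ψ ω x * h ω x ∂m‖ₑ := by
          rw [integral_muOmega hmeas hnn, Real.enorm_eq_ofReal_abs]
      _ ≤ eLpNorm (ψ ω * h ω) 1 m := by
          rw [eLpNorm_one_eq_lintegral_enorm]
          exact enorm_integral_le_lintegral_enorm _
      _ ≤ bvNorm m var (ψ ω * h ω) := le_add_self
      _ ≤ Kvar * bvNorm m var (h ω) * bvNorm m var (ψ ω) := hmul _ _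
  refine (hvar.bvNorm_sub_const_le hψ _).trans ?_
  gcongr

lemma bvNorm_centered_mul_le [IsProbabilityMeasure m] (hvar : VariationGood m var)
    {Kvar : ℝ≥0∞}
    (hmul : ∀ g k : X → ℝ, bvNorm m var (g * k) ≤ Kvar * bvNorm m var k * bvNorm m var g)
    (hmeas : Measurable (h ω)) (hnn : ∀ x, 0 ≤ h ω x) (hψ : AEStronglyMeasurable (ψ ω) m)
    {Bh Bψ : ℝ≥0∞} (hBh : bvNorm m var (h ω) ≤ Bh) (hBψ : bvNorm m var (ψ ω) ≤ Bψ) :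
    bvNorm m var (fun x => centered m h ψ ω x * h ω x) ≤
      Kvar * Bh * (Bψ + Kvar * Bh * Bψ * (var (fun _ => 1) + 1)) :=
  calc bvNorm m var (centered m h ψ ω * h ω)
      ≤ Kvar * bvNorm m var (h ω) * bvNorm m var (centered m h ψ ω) := hmul _ _
    _ ≤ Kvar * Bh * (Bψ + Kvar * Bh * Bψ * (var (fun _ => 1) + 1)) := by
        grw [bvNorm_centered_le hvar hmul hmeas hnn hψ, hBh, hBψ]


lemma memBV_centered_mul [IsProbabilityMeasure m] (hvar : VariationGood m var)
    {Kvar : ℝ≥0∞} (hKvar : Kvar < ∞)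
    (hmul : ∀ g k : X → ℝ, bvNorm m var (g * k) ≤ Kvar * bvNorm m var k * bvNorm m var g)
    (hmeas : Measurable (h ω)) (hnn : ∀ x, 0 ≤ h ω x) (hψ : Measurable (ψ ω))
    (hh_bv : bvNorm m var (h ω) < ∞) (hψ_bv : bvNorm m var (ψ ω) < ∞) :
    MemBV m var (centered m h ψ ω * h ω) := by
  have := hvar.v5
  refine memBV_mul hKvar hmul (hψ.sub_const _) hmeas
    ((bvNorm_centered_le hvar hmul hmeas hnn hψ.aestronglyMeasurable).trans_lt ?_) hh_bv
  finiteness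

lemma bvNorm_apply_centered_mul_le [IsProbabilityMeasure m] (hvar : VariationGood m var)
    {Kvar : ℝ≥0∞} (hKvar : Kvar < ∞)
    (hmul : ∀ g k : X → ℝ, bvNorm m var (g * k) ≤ Kvar * bvNorm m var k * bvNorm m var g)
    {T : (X → ℝ) → X → ℝ} {r : ℝ≥0∞}
    (hT : ∀ φ, MemBV m var φ → ∫ x, φ x ∂m = 0 → bvNorm m var (T φ) ≤ r * bvNorm m var φ)
    (hmeas : Measurable (h ω)) (hnn : ∀ x, 0 ≤ h ω x) (hint : Integrable (h ω) m)
    (hmass : ∫ x, h ω x ∂m = 1) (hψ : Measurable (ψ ω))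
    {Bh Bψ : ℝ≥0∞} (hBh_lt : Bh < ∞) (hBψ_lt : Bψ < ∞)
    (hBh : bvNorm m var (h ω) ≤ Bh) (hBψ : bvNorm m var (ψ ω) ≤ Bψ) :
    bvNorm m var (T fun x => centered m h ψ ω x * h ω x) ≤
      r * (Kvar * Bh * (Bψ + Kvar * Bh * Bψ * (var (fun _ => 1) + 1))) := by
  have hψh := memBV_mul hKvar hmul hψ hmeas (hBψ.trans_lt hBψ_lt) (hBh.trans_lt hBh_lt)
  have hmean_zero := integral_centered_mul_eq_zero hmeas hnn hint hmass hψh.1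
  refine (hT _ (memBV_centered_mul hvar hKvar hmul hmeas hnn hψ (hBh.trans_lt hBh_lt)
      (hBψ.trans_lt hBψ_lt)) hmean_zero).trans ?_
  gcongr
  exact bvNorm_centered_mul_le hvar hmul hmeas hnn hψ.aestronglyMeasurable hBh hBψ

end Fibres

lemma ofReal_mul_exp_neg_mul_nat {K : ℝ} (hK : 0 ≤ K) (lam : ℝ) (n : ℕ) :
    ENNReal.ofReal (K * Real.exp (-lam * n)) =
      ENNReal.ofReal K * ENNReal.ofReal (Real.exp (-lam)) ^ n := by
  rw [ENNReal.ofReal_mul hK, ← ENNReal.ofReal_pow (Real.exp_pos _).le, ← Real.exp_nat_mul,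
    mul_comm (n : ℝ)]

lemma Gsum_eq_mul {Ω X : Type*} [MeasurableSpace Ω] [MeasurableSpace X] (σ : Ω → Ω)
    (L : Ω → (X → ℝ) → X → ℝ) (h ψt : Ω → X → ℝ) (ω : Ω) (n : ℕ) :
    Gsum σ L h ψt ω n = (fun x => 1 / h (σ^[n] ω) x) *
      ∑ j ∈ Finset.range n, Lit σ L (σ^[j] ω) (n - j) (fun y => ψt (σ^[j] ω) y * h (σ^[j] ω) y) := by
  funext x
  simp only [Gsum, Pi.mul_apply, Finset.sum_apply]
  ring

lemma bvNorm_Gsum_centered_le {Ω X : Type*} [MeasurableSpace Ω] [MeasurableSpace X]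
    {m : Measure X} [IsProbabilityMeasure m] {var : (X → ℝ) → ℝ≥0∞} {σ : Ω → Ω}
    {L : Ω → (X → ℝ) → X → ℝ} {h ψ : Ω → X → ℝ} (hvar : VariationGood m var)
    {Kvar : ℝ≥0∞} (hKvar : Kvar < ∞)
    (hmul : ∀ g k : X → ℝ, bvNorm m var (g * k) ≤ Kvar * bvNorm m var k * bvNorm m var g)
    (hL : ∀ ω φ, Integrable φ m → Integrable (L ω φ) m)
    (hmeas_h : ∀ ω, Measurable (h ω)) (hnn : ∀ ω x, 0 ≤ h ω x) (hψ : ∀ ω, Measurable (ψ ω))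
    {K lam : ℝ} (hK : 0 ≤ K) {c : ℝ} (hc : 0 < c) {Bh Bψ : ℝ≥0∞} (hBh_lt : Bh < ∞)
    (hBψ_lt : Bψ < ∞) (hBψ : ∀ ω, bvNorm m var (ψ ω) ≤ Bψ) {ω : Ω}
    (hdecay : ∀ j k φ, MemBV m var φ → ∫ x, φ x ∂m = 0 →
      bvNorm m var (Lit σ L (σ^[j] ω) k φ) ≤ ENNReal.ofReal (K * Real.exp (-lam * k)) * bvNorm m var φ)
    (hBh : ∀ j, bvNorm m var (h (σ^[j] ω)) ≤ Bh) (hinf : ∀ j, c ≤ essInf (h (σ^[j] ω)) m)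
    (hmass : ∀ j, ∫ x, h (σ^[j] ω) x ∂m = 1) (hint : ∀ j, Integrable (h (σ^[j] ω)) m) (n : ℕ) :
    bvNorm m var (Gsum σ L h (centered m h ψ) ω n) ≤
      Kvar * (ENNReal.ofReal K * (Kvar * Bh * (Bψ + Kvar * Bh * Bψ * (var (fun _ => 1) + 1))) *
        (1 - ENNReal.ofReal (Real.exp (-lam)))⁻¹) * (Bh / ENNReal.ofReal c ^ 2 + ENNReal.ofReal c⁻¹) := by
  rw [Gsum_eq_mul]
  refine (hmul _ _).trans (mul_le_mul' (mul_le_mul' le_rfl ?_) ?_)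
  · refine hvar.bvNorm_sum_range_le_of_geometric (fun j _ => ?_) (fun j _ => ?_)
    · exact (integrable_Lit hL _ _ (memBV_centered_mul hvar hKvar hmul (hmeas_h _) (hnn _)
        (hψ _) ((hBh j).trans_lt hBh_lt) ((hBψ _).trans_lt hBψ_lt)).1).aestronglyMeasurable
    · have hterm := bvNorm_apply_centered_mul_le hvar hKvar hmul (hdecay j (n - j)) (hmeas_h _)
        (hnn _) (hint j) (hmass j) (hψ _) hBh_lt hBψ_lt (hBh j) (hBψ _)
      rw [ofReal_mul_exp_neg_mul_nat hK] at hterm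
      exact hterm.trans_eq (by ring)
  · exact (hvar.bvNorm_one_div_le (ae_of_all _ (hnn _)) hc (hinf n)).trans
      (by gcongr; exact le_self_add.trans (hBh n))

theorem Gseq_bv_bounded_general {Ω X : Type*} [MeasurableSpace Ω] [MeasurableSpace X]
    (P : Measure Ω) (σ : Ω → Ω)
    (m : Measure X) [IsProbabilityMeasure m] (var : (X → ℝ) → ℝ≥0∞)
    (f : Ω → X → X) (L : Ω → (X → ℝ) → X → ℝ)
    (hvar : VariationGood m var) (hgood : UniformlyGood P σ m var f L)
    (h : Ω → X → ℝ) (hacim : IsACIM P σ m var L h)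
    (c : ℝ) (hc : 0 < c) (hinf : ∀ᵐ ω ∂P, c / 2 ≤ essInf (h ω) m)
    (ψob : Ω → X → ℝ) (hψmeas : Measurable (Function.uncurry ψob))
    (hψbd : ∃ B : ℝ≥0∞, B < ∞ ∧ ∀ ω, bvNorm m var (ψob ω) ≤ B) :
    ∀ᵐ ω ∂P, (⨆ n : ℕ, bvNorm m var (Gsum σ L h (centered m h ψob) ω n)) < ∞ := by
  obtain ⟨K, lam, hK, hlam, hdecay⟩ := hgood.h5
  obtain ⟨Kvar, hKvar, hmul⟩ := hvar.exists_bvNorm_mul_le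
  obtain ⟨Bψ, hBψ_lt, hBψ⟩ := hψbd
  obtain ⟨Bh, hBh_lt, hBh⟩ := hacim.bdd
  have hmeas_h : ∀ ω, Measurable (h ω) := fun _ => hacim.meas.comp measurable_prodMk_left
  have hmeas_ψ : ∀ ω, Measurable (ψob ω) := fun _ => hψmeas.comp measurable_prodMk_left
  have hgeom : (1 - ENNReal.ofReal (Real.exp (-lam)))⁻¹ < ∞ :=
    ENNReal.inv_lt_top.mpr <| tsub_pos_of_lt <|
      ENNReal.ofReal_lt_one.mpr (Real.exp_lt_one_iff.mpr (neg_lt_zero.mpr hlam))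
  have hdiv : Bh / ENNReal.ofReal (c / 2) ^ 2 < ∞ := ENNReal.div_lt_top hBh_lt.ne (by positivity)
  have hσ := hgood.sigma_pres
  filter_upwards [ae_forall_iterate hσ hdecay, ae_forall_iterate hσ hBh,
    ae_forall_iterate hσ hinf, ae_forall_iterate hσ hacim.mass,
    ae_forall_iterate hσ hacim.mem_bv] with ω hdecω hBhω hinfω hmassω hmemω
  refine (iSup_le fun n => bvNorm_Gsum_centered_le hvar hKvar hmul hgood.L_int hmeas_h
    hacim.nonneg hmeas_ψ hK.le (half_pos hc) hBh_lt hBψ_lt hBψ hdecω hBhω hinfω hmassω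
    (fun j => (hmemω j).1) n).trans_lt ?_
  exact ENNReal.mul_lt_top (ENNReal.mul_lt_top hKvar (ENNReal.mul_lt_top
    (ENNReal.mul_lt_top ENNReal.ofReal_lt_top (by have := hvar.v5; finiteness)) hgeom))
    (ENNReal.add_lt_top.mpr ⟨hdiv, ENNReal.ofReal_lt_top⟩)

/-- Lemma: uniform BV bound on the martingale coboundary terms:
for a.e. `ω`, `sup_{n ≥ 0} ‖G_n‖_BV < ∞`. -/
theorem Gseq_bv_bounded {Ω X : Type*} [MeasurableSpace Ω] [MeasurableSpace X]
    (P : Measure Ω) [IsProbabilityMeasure P] (σ : Ω → Ω)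
    (m : Measure X) [IsProbabilityMeasure m] (var : (X → ℝ) → ℝ≥0∞)
    (f : Ω → X → X) (L : Ω → (X → ℝ) → X → ℝ)
    (hvar : VariationGood m var) (hgood : UniformlyGood P σ m var f L)
    (h : Ω → X → ℝ) (hacim : IsACIM P σ m var L h)
    (c : ℝ) (hc : 0 < c) (hinf : ∀ᵐ ω ∂P, c / 2 ≤ essInf (h ω) m)
    (ψob : Ω → X → ℝ) (hψmeas : Measurable (Function.uncurry ψob))
    (hψbd : ∃ B : ℝ≥0∞, B < ∞ ∧ ∀ ω, bvNorm m var (ψob ω) ≤ B) :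
    ∀ᵐ ω ∂P, (⨆ n : ℕ, bvNorm m var (Gsum σ L h (centered m h ψob) ω n)) < ∞ :=
  Gseq_bv_bounded_general P σ m var f L hvar hgood h hacim c hc hinf ψob hψmeas hψbd

end RandomASIP
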